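/- arXiv:2506.01083 — 2 statements merged into one kernel-verified Lean document; each statement's English description precedes it below -/
import Mathlib

section
/- Define the zeroth-order operator K̃_k(ψ)(y_k, x_k) = ∫∫ N(y_k; A_{k-1} y_{k-1}, Σ_{k-1}) ψ(y_{k-1}, x_{k-1}) N(x_{k-1}; x_k, C_k) dy_{k-1} dx_{k-1}, and let f(y | x) = N(y; H x + b, R). Then the k-fold composition satisfies K̃_k ∘ ⋯ ∘ K̃_1 (f)(y_k, x_k) = N(y_k; F_k x_k + z_k, Ω_k), where F_k = S_0^k H, z_k = S_0^k b, with semigroup S_m^n = A_{n-1} ⋯ A_m, and Ω_k is given by the recursion Ω_0 = R, Ω_k = A_{k-1}(F_{k-1} C_k F_{k-1}ᵀ + Ω_{k-1}) A_{k-1}ᵀ + Σ_{k-1}. -/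
open MeasureTheory Matrix Real

/-- Multivariate Gaussian density `N(x; μ, P)` on `ℝ^n`. -/
noncomputable def gpdf {n : ℕ} (x μ : Fin n → ℝ) (P : Matrix (Fin n) (Fin n) ℝ) : ℝ :=
  (Real.sqrt ((2 * Real.pi) ^ n * P.det))⁻¹ *
    Real.exp (-(1 / 2) * ((x - μ) ⬝ᵥ (P⁻¹ *ᵥ (x - μ))))

/-- The `k`-fold composition `K̃_k ∘ ⋯ ∘ K̃_1` of the zeroth-order operators, where
`K̃_k(ψ)(y_k, x_k) = ∫∫ N(y_k; A_{k-1} y_{k-1}, Σ_{k-1}) ψ(y_{k-1}, x_{k-1})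
N(x_{k-1}; x_k, C_k) dy_{k-1} dx_{k-1}`. -/
noncomputable def gtwist {c d : ℕ}
    (A Sg : ℕ → Matrix (Fin c) (Fin c) ℝ)
    (C : ℕ → Matrix (Fin d) (Fin d) ℝ)
    (f : (Fin c → ℝ) → (Fin d → ℝ) → ℝ) : ℕ → (Fin c → ℝ) → (Fin d → ℝ) → ℝ
  | 0 => f
  | k + 1 => fun y x =>
      ∫ y', ∫ x', gpdf y (A k *ᵥ y') (Sg k) * gtwist A Sg C f k y' x' *
        gpdf x' x (C (k + 1))

/-- The semigroup `S_0^k = A_{k-1} ⋯ A_0`. -/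
noncomputable def S0 {c : ℕ} (A : ℕ → Matrix (Fin c) (Fin c) ℝ) :
    ℕ → Matrix (Fin c) (Fin c) ℝ
  | 0 => 1
  | k + 1 => A k * S0 A k

/-- The covariance recursion `Ω_0 = R`,
`Ω_k = A_{k-1} (F_{k-1} C_k F_{k-1}ᵀ + Ω_{k-1}) A_{k-1}ᵀ + Σ_{k-1}` with `F_k = S_0^k H`. -/
noncomputable def Ωseq {c d : ℕ} (A Sg : ℕ → Matrix (Fin c) (Fin c) ℝ)
    (C : ℕ → Matrix (Fin d) (Fin d) ℝ) (H : Matrix (Fin c) (Fin d) ℝ)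
    (R : Matrix (Fin c) (Fin c) ℝ) : ℕ → Matrix (Fin c) (Fin c) ℝ
  | 0 => R
  | k + 1 => A k * ((S0 A k * H) * C (k + 1) * (S0 A k * H)ᵀ + Ωseq A Sg C H R k) *
      (A k)ᵀ + Sg k

/-! Integrating `u` out of `N(y; M u + μ, P) N(u; ν, Q)` gives `N(y; M ν + μ, M Q Mᵀ + P)`:
completing the square in `u` (Woodbury identity, matrix determinant lemma) factors the product as
that density times a Gaussian density in `u`, which integrates to one. One step of the recursion
applies this twice, to the `x`-integral (`M = F_k`, `Q = C_{k+1}`) and then to the `y`-integral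
(`M = A_k`, `Q = F_k C_{k+1} F_kᵀ + Ω_k`). -/

section GaussianIntegral

variable {ι : Type*} [Fintype ι]

theorem integral_exp_neg_half_dotProduct_self :
    ∫ x : ι → ℝ, exp (-(1 / 2) * (x ⬝ᵥ x)) = √((2 * π) ^ Fintype.card ι) := by
  have hprod (x : ι → ℝ) : exp (-(1 / 2) * (x ⬝ᵥ x)) = ∏ i, exp (-(1 / 2) * x i ^ 2) := by
    simp only [← exp_sum, dotProduct, Finset.mul_sum, sq]
  have hline : ∫ t : ℝ, exp (-(1 / 2) * t ^ 2) = √(2 * π) := by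
    rw [integral_gaussian]
    ring_nf
  simp_rw [hprod, integral_fintype_prod_volume_eq_pow (fun t : ℝ ↦ exp (-(1 / 2) * t ^ 2)), hline]
  rw [eq_comm, sqrt_eq_iff_eq_sq (by positivity) (by positivity), pow_right_comm,
    sq_sqrt (by positivity)]

theorem integral_comp_mulVec [DecidableEq ι] (B : Matrix ι ι ℝ) (hB : B.det ≠ 0)
    (f : (ι → ℝ) → ℝ) :
    ∫ x, f (B *ᵥ x) = |B.det|⁻¹ * ∫ y, f y := by
  have hdet : LinearMap.det (toLin' B) ≠ 0 := by rwa [LinearMap.det_toLin']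
  have hemb : MeasurableEmbedding (toLin' B) :=
    (LinearMap.isClosedEmbedding_of_injective (LinearMap.ker_eq_bot.2
      (mulVec_injective_iff_isUnit.2 (isUnit_iff_isUnit_det B |>.2 hB.isUnit)))).measurableEmbedding
  simp_rw [← toLin'_apply]
  rw [← hemb.integral_map, Measure.map_linearMap_addHaar_eq_smul_addHaar volume hdet,
    integral_smul_measure, LinearMap.det_toLin', ENNReal.toReal_ofReal (abs_nonneg _), abs_inv, smul_eq_mul]

open scoped MatrixOrder in
theorem integral_exp_neg_half_quadratic [DecidableEq ι] {T : Matrix ι ι ℝ} (hT : T.PosDef)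
    (μ : ι → ℝ) :
    ∫ x : ι → ℝ, exp (-(1 / 2) * ((x - μ) ⬝ᵥ T *ᵥ (x - μ))) =
      √((2 * π) ^ Fintype.card ι / T.det) := by
  obtain ⟨B, hTB⟩ := CStarAlgebra.nonneg_iff_eq_star_mul_self.mp hT.posSemidef.nonneg
  have hdet : T.det = B.det ^ 2 := by
    rw [hTB, star_eq_conjTranspose, det_mul, det_conjTranspose, star_trivial, sq]
  have hB : B.det ≠ 0 := by
    have := hT.det_pos
    rintro h
    simp [hdet, h] at this
  have hquad (x : ι → ℝ) : x ⬝ᵥ T *ᵥ x = (B *ᵥ x) ⬝ᵥ (B *ᵥ x) := by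
    rw [hTB, star_eq_conjTranspose, conjTranspose_eq_transpose_of_trivial, ← mulVec_mulVec,
      dotProduct_mulVec, vecMul_transpose]
  rw [integral_sub_right_eq_self (fun x ↦ exp (-(1 / 2) * (x ⬝ᵥ T *ᵥ x))) μ]
  simp_rw [hquad]
  rw [integral_comp_mulVec B hB (fun y ↦ exp (-(1 / 2) * (y ⬝ᵥ y))),
    integral_exp_neg_half_dotProduct_self, hdet, sqrt_div (by positivity), sqrt_sq_eq_abs,
    inv_mul_eq_div]

end GaussianIntegral

section CompletingTheSquare

theorem Matrix.PosDef.transpose_eq {m : Type*} {P : Matrix m m ℝ} (hP : P.PosDef) : Pᵀ = P :=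
  (isHermitian_iff_isSymm.1 hP.isHermitian).eq

variable {m n : Type*} [Fintype m] [Fintype n]

theorem dotProduct_mulVec_eq_transpose_mulVec_dotProduct (A : Matrix m n ℝ) (x : m → ℝ)
    (y : n → ℝ) : x ⬝ᵥ A *ᵥ y = (Aᵀ *ᵥ x) ⬝ᵥ y := by
  rw [dotProduct_mulVec, mulVec_transpose]

theorem Matrix.PosDef.mul_mul_transpose_add {P : Matrix m m ℝ} {Q : Matrix n n ℝ}
    (hP : P.PosDef) (hQ : Q.PosSemidef) (M : Matrix m n ℝ) : (M * Q * Mᵀ + P).PosDef := by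
  simpa using PosDef.posSemidef_add (hQ.mul_mul_conjTranspose_same M) hP

theorem Matrix.PosDef.inv_add_transpose_mul_mul [DecidableEq m] [DecidableEq n]
    {P : Matrix m m ℝ} {Q : Matrix n n ℝ} (hP : P.PosDef) (hQ : Q.PosDef) (M : Matrix m n ℝ) :
    (Q⁻¹ + Mᵀ * P⁻¹ * M).PosDef := by
  simpa using hQ.inv.add_posSemidef (hP.inv.posSemidef.conjTranspose_mul_mul_same M)

theorem dotProduct_mulVec_sub_inv_mulVec [DecidableEq n] {T : Matrix n n ℝ} (hT : T.PosDef)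
    (a v : n → ℝ) :
    (v - T⁻¹ *ᵥ a) ⬝ᵥ T *ᵥ (v - T⁻¹ *ᵥ a) = v ⬝ᵥ T *ᵥ v - 2 * (a ⬝ᵥ v) + a ⬝ᵥ T⁻¹ *ᵥ a := by
  have hTa : T *ᵥ (T⁻¹ *ᵥ a) = a := by
    rw [mulVec_mulVec, mul_nonsing_inv T hT.det_pos.ne'.isUnit, one_mulVec]
  have hsymm : (T⁻¹ *ᵥ a) ⬝ᵥ T *ᵥ v = a ⬝ᵥ v := by
    rw [dotProduct_mulVec_eq_transpose_mulVec_dotProduct, hT.transpose_eq, hTa]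
  rw [mulVec_sub, dotProduct_sub, sub_dotProduct, sub_dotProduct, hTa, hsymm,
    dotProduct_comm v a, dotProduct_comm (T⁻¹ *ᵥ a) a]
  ring

theorem sum_quadratic_forms_eq_completeSquare [DecidableEq m] [DecidableEq n]
    {P : Matrix m m ℝ} {Q : Matrix n n ℝ} (hP : P.PosDef) (hQ : Q.PosDef) (M : Matrix m n ℝ)
    (w : m → ℝ) (v : n → ℝ) :
    (w - M *ᵥ v) ⬝ᵥ P⁻¹ *ᵥ (w - M *ᵥ v) + v ⬝ᵥ Q⁻¹ *ᵥ v =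
      w ⬝ᵥ (M * Q * Mᵀ + P)⁻¹ *ᵥ w +
        (v - (Q⁻¹ + Mᵀ * P⁻¹ * M)⁻¹ *ᵥ (Mᵀ *ᵥ (P⁻¹ *ᵥ w))) ⬝ᵥ
          (Q⁻¹ + Mᵀ * P⁻¹ * M) *ᵥ (v - (Q⁻¹ + Mᵀ * P⁻¹ * M)⁻¹ *ᵥ (Mᵀ *ᵥ (P⁻¹ *ᵥ w))) := by
  have hT := hP.inv_add_transpose_mul_mul hQ M
  set T := Q⁻¹ + Mᵀ * P⁻¹ * M
  set a := Mᵀ *ᵥ (P⁻¹ *ᵥ w)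
  have hPinv : P⁻¹ᵀ = P⁻¹ := hP.inv.transpose_eq
  have hcross : w ⬝ᵥ P⁻¹ *ᵥ (M *ᵥ v) = a ⬝ᵥ v := by
    rw [dotProduct_mulVec_eq_transpose_mulVec_dotProduct, hPinv,
      dotProduct_mulVec_eq_transpose_mulVec_dotProduct]
  have hcross' : (M *ᵥ v) ⬝ᵥ P⁻¹ *ᵥ w = a ⬝ᵥ v := by
    rw [dotProduct_comm, dotProduct_mulVec_eq_transpose_mulVec_dotProduct]
  have hMv : (M *ᵥ v) ⬝ᵥ P⁻¹ *ᵥ (M *ᵥ v) = v ⬝ᵥ (Mᵀ * P⁻¹ * M) *ᵥ v := by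
    rw [dotProduct_comm, dotProduct_mulVec_eq_transpose_mulVec_dotProduct, mulVec_mulVec,
      mulVec_mulVec, dotProduct_comm]
  have hTv : v ⬝ᵥ T *ᵥ v = v ⬝ᵥ Q⁻¹ *ᵥ v + v ⬝ᵥ (Mᵀ * P⁻¹ * M) *ᵥ v := by
    rw [add_mulVec, dotProduct_add]
  have hwoodbury : w ⬝ᵥ (M * Q * Mᵀ + P)⁻¹ *ᵥ w = w ⬝ᵥ P⁻¹ *ᵥ w - a ⬝ᵥ T⁻¹ *ᵥ a := by
    rw [add_comm, add_mul_mul_inv_eq_sub P M Q Mᵀ hP.isUnit hQ.isUnit hT.isUnit, sub_mulVec,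
      dotProduct_sub, ← mulVec_mulVec, ← mulVec_mulVec, ← mulVec_mulVec,
      dotProduct_mulVec_eq_transpose_mulVec_dotProduct (P⁻¹ * M), transpose_mul, hPinv,
      ← mulVec_mulVec]
  rw [dotProduct_mulVec_sub_inv_mulVec hT, hwoodbury, hTv, mulVec_sub, sub_dotProduct,
    dotProduct_sub, dotProduct_sub, hcross, hcross', hMv]
  ring

theorem Matrix.det_mul_mul_transpose_add [DecidableEq m] [DecidableEq n] {P : Matrix m m ℝ}
    {Q : Matrix n n ℝ} (hP : P.PosDef) (hQ : Q.PosDef) (M : Matrix m n ℝ) :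
    (M * Q * Mᵀ + P).det = P.det * Q.det * (Q⁻¹ + Mᵀ * P⁻¹ * M).det := by
  have hfactor : 1 + Q * Mᵀ * P⁻¹ * M = Q * (Q⁻¹ + Mᵀ * P⁻¹ * M) := by
    rw [Matrix.mul_add, mul_nonsing_inv Q hQ.det_pos.ne'.isUnit]
    simp only [Matrix.mul_assoc]
  rw [add_comm, Matrix.mul_assoc, det_add_mul M (Q * Mᵀ) hP.det_pos.ne'.isUnit, hfactor, det_mul,
    mul_assoc]

end CompletingTheSquare

section GaussianDensity

variable {m n : ℕ}

theorem integral_gpdf {P : Matrix (Fin n) (Fin n) ℝ} (hP : P.PosDef) (μ : Fin n → ℝ) :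
    ∫ x, gpdf x μ P = 1 := by
  have hdet := hP.det_pos
  simp only [gpdf]
  rw [integral_const_mul, integral_exp_neg_half_quadratic hP.inv, det_nonsing_inv,
    Ring.inverse_eq_inv, div_inv_eq_mul, Fintype.card_fin, inv_mul_cancel₀ (by positivity)]

theorem gpdf_mul_gpdf {P : Matrix (Fin m) (Fin m) ℝ} {Q : Matrix (Fin n) (Fin n) ℝ}
    (hP : P.PosDef) (hQ : Q.PosDef) (M : Matrix (Fin m) (Fin n) ℝ) (y μ : Fin m → ℝ)
    (u ν : Fin n → ℝ) :
    gpdf y (M *ᵥ u + μ) P * gpdf u ν Q =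
      gpdf y (M *ᵥ ν + μ) (M * Q * Mᵀ + P) *
        gpdf u (ν + (Q⁻¹ + Mᵀ * P⁻¹ * M)⁻¹ *ᵥ (Mᵀ *ᵥ (P⁻¹ *ᵥ (y - (M *ᵥ ν + μ)))))
          (Q⁻¹ + Mᵀ * P⁻¹ * M)⁻¹ := by
  have hT := hP.inv_add_transpose_mul_mul hQ M
  set T := Q⁻¹ + Mᵀ * P⁻¹ * M with hTdef
  set w := y - (M *ᵥ ν + μ)
  have hnormalizer : (√((2 * π) ^ m * P.det))⁻¹ * (√((2 * π) ^ n * Q.det))⁻¹ =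
      (√((2 * π) ^ m * (M * Q * Mᵀ + P).det))⁻¹ * (√((2 * π) ^ n * T⁻¹.det))⁻¹ := by
    have := hP.det_pos
    have := hQ.det_pos
    have := hT.det_pos
    have := (hP.mul_mul_transpose_add hQ.posSemidef M).det_pos
    rw [← mul_inv, ← mul_inv, ← sqrt_mul (by positivity), ← sqrt_mul (by positivity),
      det_mul_mul_transpose_add hP hQ, ← hTdef, det_nonsing_inv, Ring.inverse_eq_inv]
    field_simp
  have hresidual : y - (M *ᵥ u + μ) = w - M *ᵥ (u - ν) := by
    simp only [w, mulVec_sub]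
    abel
  have hresidual' : u - (ν + T⁻¹ *ᵥ (Mᵀ *ᵥ (P⁻¹ *ᵥ w))) = u - ν - T⁻¹ *ᵥ (Mᵀ *ᵥ (P⁻¹ *ᵥ w)) :=
    sub_add_eq_sub_sub ..
  simp only [gpdf]
  rw [mul_mul_mul_comm, hnormalizer, ← exp_add, mul_mul_mul_comm, ← exp_add, hresidual,
    hresidual', nonsing_inv_nonsing_inv T hT.det_pos.ne'.isUnit]
  congr 2
  linarith [sum_quadratic_forms_eq_completeSquare hP hQ M w (u - ν)]

theorem integral_gpdf_mul_gpdf {P : Matrix (Fin m) (Fin m) ℝ} {Q : Matrix (Fin n) (Fin n) ℝ}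
    (hP : P.PosDef) (hQ : Q.PosDef) (M : Matrix (Fin m) (Fin n) ℝ) (y μ : Fin m → ℝ)
    (ν : Fin n → ℝ) :
    ∫ u, gpdf y (M *ᵥ u + μ) P * gpdf u ν Q = gpdf y (M *ᵥ ν + μ) (M * Q * Mᵀ + P) := by
  simp_rw [gpdf_mul_gpdf hP hQ M y μ _ ν]
  rw [integral_const_mul, integral_gpdf (hP.inv_add_transpose_mul_mul hQ M).inv, mul_one]

end GaussianDensity

theorem Ωseq_posDef {c d : ℕ} (A : ℕ → Matrix (Fin c) (Fin c) ℝ)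
    {Sg : ℕ → Matrix (Fin c) (Fin c) ℝ} {C : ℕ → Matrix (Fin d) (Fin d) ℝ}
    (H : Matrix (Fin c) (Fin d) ℝ) {R : Matrix (Fin c) (Fin c) ℝ}
    (hR : R.PosDef) (hSg : ∀ k, (Sg k).PosDef) (hC : ∀ k, (C k).PosDef) (k : ℕ) :
    (Ωseq A Sg C H R k).PosDef := by
  induction k with
  | zero => exact hR
  | succ k ih =>
    exact (hSg k).mul_mul_transpose_add
      (ih.mul_mul_transpose_add (hC (k + 1)).posSemidef (S0 A k * H)).posSemidef (A k)

/-- Sequential zeroth-order twisting approximation: with `f(y|x) = N(y; H x + b, R)`,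
`K̃_k ∘ ⋯ ∘ K̃_1 (f)(y_k, x_k) = N(y_k; F_k x_k + z_k, Ω_k)` with `F_k = S_0^k H`,
`z_k = S_0^k b`, and `Ω_k` given by the recursion. -/
theorem stmt3 {c d : ℕ}
    (A Sg : ℕ → Matrix (Fin c) (Fin c) ℝ)
    (C : ℕ → Matrix (Fin d) (Fin d) ℝ)
    (H : Matrix (Fin c) (Fin d) ℝ) (b : Fin c → ℝ) (R : Matrix (Fin c) (Fin c) ℝ)
    (hR : R.PosDef) (hSg : ∀ k, (Sg k).PosDef) (hC : ∀ k, (C k).PosDef) :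
    ∀ k (y : Fin c → ℝ) (x : Fin d → ℝ),
      gtwist A Sg C (fun y0 x0 => gpdf y0 (H *ᵥ x0 + b) R) k y x =
        gpdf y ((S0 A k * H) *ᵥ x + S0 A k *ᵥ b) (Ωseq A Sg C H R k) := by
  intro k
  induction k with
  | zero => simp [gtwist, S0, Ωseq]
  | succ k ih =>
    intro y x
    have hΩ := Ωseq_posDef A H hR hSg hC k
    calc gtwist A Sg C (fun y0 x0 => gpdf y0 (H *ᵥ x0 + b) R) (k + 1) y x
        = ∫ y', gpdf y (A k *ᵥ y' + 0) (Sg k) * gpdf y' ((S0 A k * H) *ᵥ x + S0 A k *ᵥ b)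
            ((S0 A k * H) * C (k + 1) * (S0 A k * H)ᵀ + Ωseq A Sg C H R k) := by
          simp only [gtwist, ih, mul_assoc, integral_const_mul,
            integral_gpdf_mul_gpdf hΩ (hC (k + 1)), add_zero]
      _ = _ := integral_gpdf_mul_gpdf (hSg k)
            (hΩ.mul_mul_transpose_add (hC (k + 1)).posSemidef _) (A k) y 0 _
      _ = _ := by simp [S0, Ωseq, mulVec_add, mulVec_mulVec, Matrix.mul_assoc]
end

section
/- Suppose A ∈ ℝ^{c×c} and Σ ∈ ℝ^{c×c} satisfy A Aᵀ + Σ = I (so the AR(1) map y ↦ A y + noise leaves N(0, I) invariant), and the spectral radius of A is strictly less than 1. Let C be a fixed matrix and define the recursion F_k = A F_{k-1}, Ω_k = A (F_{k-1} C F_{k-1}ᵀ + Ω_{k-1}) Aᵀ + Σ with F_0 = H, Ω_0 = R. Then F_k → 0 and Ω_k → I as k → ∞. -/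
/-!
Unrolling the recursions gives `F_k = A^k F_0` and, since `A Aᵀ + Σ = I` makes `I` a fixed
point of `Ω ↦ A Ω Aᵀ + Σ`,
`Ω_k = I + A^k (Ω_0 - I) (A^k)ᵀ + k A^k (F_0 C F_0ᵀ) (A^k)ᵀ`.
By Gelfand's formula, spectral radius `< 1` gives `‖A^k‖ ≤ r^k` eventually for some `r < 1`,
so both `A^k` and `k A^k` tend to `0`.
-/

open Matrix Filter
open scoped NNReal Topology

namespace spectrum

variable {A : Type*} [NormedRing A] [NormedAlgebra ℂ A] [CompleteSpace A]

theorem eventually_nnnorm_pow_le_of_spectralRadius_lt {a : A} {r : ℝ≥0}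
    (h : spectralRadius ℂ a < r) : ∀ᶠ n : ℕ in atTop, ‖a ^ n‖₊ ≤ r ^ n := by
  filter_upwards [(pow_nnnorm_pow_one_div_tendsto_nhds_spectralRadius a).eventually_lt_const h,
    eventually_ge_atTop 1] with n hn hn1
  have hn0 : (0 : ℝ) < n := by exact_mod_cast hn1
  rw [one_div, ← ENNReal.coe_rpow_of_nonneg _ (inv_nonneg.2 hn0.le), ENNReal.coe_lt_coe,
    NNReal.rpow_inv_lt_iff hn0, NNReal.rpow_natCast] at hn
  exact hn.le

theorem exists_lt_one_eventually_norm_pow_le {a : A} (h : spectralRadius ℂ a < 1) :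
    ∃ r : ℝ, 0 ≤ r ∧ r < 1 ∧ ∀ᶠ n : ℕ in atTop, ‖a ^ n‖ ≤ r ^ n := by
  obtain ⟨r, hρr, hr1⟩ := ENNReal.lt_iff_exists_nnreal_btwn.1 h
  refine ⟨r, r.2, by exact_mod_cast hr1, ?_⟩
  filter_upwards [eventually_nnnorm_pow_le_of_spectralRadius_lt hρr] with n hn
  exact_mod_cast hn

theorem tendsto_pow_atTop_nhds_zero_of_spectralRadius_lt_one {a : A}
    (h : spectralRadius ℂ a < 1) : Tendsto (a ^ ·) atTop (𝓝 0) := by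
  obtain ⟨r, hr0, hr1, hpow⟩ := exists_lt_one_eventually_norm_pow_le h
  exact squeeze_zero_norm' hpow (tendsto_pow_atTop_nhds_zero_of_lt_one hr0 hr1)

theorem tendsto_nsmul_pow_atTop_nhds_zero_of_spectralRadius_lt_one {a : A}
    (h : spectralRadius ℂ a < 1) : Tendsto (fun n : ℕ => n • a ^ n) atTop (𝓝 0) := by
  obtain ⟨r, hr0, hr1, hpow⟩ := exists_lt_one_eventually_norm_pow_le h
  refine squeeze_zero_norm' ?_ (tendsto_self_mul_const_pow_of_lt_one hr0 hr1)
  filter_upwards [hpow] with n hn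
  exact norm_nsmul_le.trans (mul_le_mul_of_nonneg_left hn n.cast_nonneg)

theorem spectralRadius_lt_one_of_forall_norm_lt_one {a : A}
    (h : ∀ z ∈ spectrum ℂ a, ‖z‖ < 1) : spectralRadius ℂ a < 1 := by
  rcases (spectrum ℂ a).eq_empty_or_nonempty with hempty | hne
  · simp [spectralRadius, hempty]
  · exact_mod_cast spectralRadius_lt_of_forall_lt_of_nonempty hne (r := 1)
      fun z hz => by exact_mod_cast h z hz

end spectrum

namespace Matrix

theorem tendsto_of_tendsto_map_ofReal {m n : Type*} {ι : Type*} {l : Filter ι}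
    {X : ι → Matrix m n ℝ} {M : Matrix m n ℝ}
    (h : Tendsto (fun k => (X k).map (algebraMap ℝ ℂ)) l (𝓝 (M.map (algebraMap ℝ ℂ)))) :
    Tendsto X l (𝓝 M) := by
  have hre := ((continuous_id.matrix_map Complex.continuous_re).tendsto _).comp h
  simpa [Function.comp_def, Matrix.map_map] using hre

theorem tendsto_pow_and_nsmul_pow_of_forall_spectrum_norm_lt_one {n : Type*} [Fintype n]
    [DecidableEq n] {A : Matrix n n ℝ}
    (h : ∀ z ∈ spectrum ℂ (A.map (algebraMap ℝ ℂ)), ‖z‖ < 1) :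
    Tendsto (A ^ ·) atTop (𝓝 0) ∧ Tendsto (fun k : ℕ => k • A ^ k) atTop (𝓝 0) := by
  let : NormedRing (Matrix n n ℂ) := Matrix.linftyOpNormedRing
  let : NormedAlgebra ℂ (Matrix n n ℂ) := Matrix.linftyOpNormedAlgebra
  have hρ := spectrum.spectralRadius_lt_one_of_forall_norm_lt_one h
  constructor
  · refine tendsto_of_tendsto_map_ofReal ?_
    simp only [← RingHom.mapMatrix_apply, map_pow, map_zero]
    exact spectrum.tendsto_pow_atTop_nhds_zero_of_spectralRadius_lt_one hρ
  · refine tendsto_of_tendsto_map_ofReal ?_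
    simp only [← RingHom.mapMatrix_apply, map_pow, map_nsmul, map_zero]
    exact spectrum.tendsto_nsmul_pow_atTop_nhds_zero_of_spectralRadius_lt_one hρ

theorem eq_pow_mul_of_succ_eq_mul {m n R : Type*} [Fintype m] [DecidableEq m] [Semiring R]
    {A : Matrix m m R} {F : ℕ → Matrix m n R} (hF : ∀ k, F (k + 1) = A * F k) (k : ℕ) :
    F k = A ^ k * F 0 := by
  induction k with
  | zero => simp
  | succ k ih => rw [hF k, ih, pow_succ', Matrix.mul_assoc]

theorem eq_of_covariance_recursion {m n R : Type*} [Fintype m] [DecidableEq m] [Fintype n]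
    [CommRing R] {A Sg : Matrix m m R} {C : Matrix n n R} {F : ℕ → Matrix m n R}
    {Ω : ℕ → Matrix m m R}
    (hstat : A * Aᵀ + Sg = 1) (hF : ∀ k, F (k + 1) = A * F k)
    (hΩ : ∀ k, Ω (k + 1) = A * (F k * C * (F k)ᵀ + Ω k) * Aᵀ + Sg) (k : ℕ) :
    Ω k = 1 + A ^ k * (Ω 0 - 1) * (A ^ k)ᵀ
      + k • (A ^ k * (F 0 * C * (F 0)ᵀ) * (A ^ k)ᵀ) := by
  have hSg : Sg = 1 - A * Aᵀ := eq_sub_of_add_eq' hstat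
  induction k with
  | zero => simp
  | succ k ih =>
    rw [hΩ k, ih, eq_pow_mul_of_succ_eq_mul hF k, hSg]
    simp only [pow_succ', transpose_mul, succ_nsmul, mul_add, add_mul, mul_sub, sub_mul,
      mul_one, mul_smul_comm, smul_mul_assoc, Matrix.mul_assoc]
    abel

end Matrix

theorem stmt5_general {c d : ℕ}
    (A Sg : Matrix (Fin c) (Fin c) ℝ)
    (C : Matrix (Fin d) (Fin d) ℝ)
    (hstat : A * Aᵀ + Sg = 1)
    (hspec : ∀ z ∈ spectrum ℂ (A.map (algebraMap ℝ ℂ)), ‖z‖ < 1)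
    (F : ℕ → Matrix (Fin c) (Fin d) ℝ) (Ω : ℕ → Matrix (Fin c) (Fin c) ℝ)
    (hF : ∀ k, F (k + 1) = A * F k)
    (hΩ : ∀ k, Ω (k + 1) = A * (F k * C * (F k)ᵀ + Ω k) * Aᵀ + Sg) :
    Tendsto F atTop (nhds 0) ∧ Tendsto Ω atTop (nhds 1) := by
  obtain ⟨hpow, hnpow⟩ := tendsto_pow_and_nsmul_pow_of_forall_spectrum_norm_lt_one hspec
  have hpowT : Tendsto (fun k => (A ^ k)ᵀ) atTop (𝓝 0) := by
    simpa [Function.comp_def] using (continuous_id.matrix_transpose.tendsto 0).comp hpow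
  constructor
  · refine (tendsto_congr (eq_pow_mul_of_succ_eq_mul hF)).2 ?_
    simpa [Function.comp_def] using
      ((continuous_id.matrix_mul continuous_const).tendsto 0).comp hpow
  · refine (tendsto_congr (eq_of_covariance_recursion hstat hF hΩ)).2 ?_
    simp only [← smul_mul_assoc]
    simpa using (tendsto_const_nhds.add ((hpow.mul_const _).mul hpowT)).add
      ((hnpow.mul_const _).mul hpowT)

/-- If `A Aᵀ + Σ = I` (so the AR(1) map leaves `N(0, I)` invariant) and the spectral
radius of `A` is strictly less than `1`, then the recursions `F_k = A F_{k-1}` and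
`Ω_k = A (F_{k-1} C F_{k-1}ᵀ + Ω_{k-1}) Aᵀ + Σ` with `F_0 = H`, `Ω_0 = R` satisfy
`F_k → 0` and `Ω_k → I` as `k → ∞`. -/
theorem stmt5 {c d : ℕ}
    (A Sg R : Matrix (Fin c) (Fin c) ℝ)
    (C : Matrix (Fin d) (Fin d) ℝ) (H : Matrix (Fin c) (Fin d) ℝ)
    (hSg : Sg.PosSemidef) (hC : C.PosSemidef) (hR : R.PosSemidef)
    (hstat : A * Aᵀ + Sg = 1)
    (hspec : ∀ z ∈ spectrum ℂ (A.map (algebraMap ℝ ℂ)), ‖z‖ < 1)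
    (F : ℕ → Matrix (Fin c) (Fin d) ℝ) (Ω : ℕ → Matrix (Fin c) (Fin c) ℝ)
    (hF0 : F 0 = H) (hΩ0 : Ω 0 = R)
    (hF : ∀ k, F (k + 1) = A * F k)
    (hΩ : ∀ k, Ω (k + 1) = A * (F k * C * (F k)ᵀ + Ω k) * Aᵀ + Sg) :
    Tendsto F atTop (nhds 0) ∧ Tendsto Ω atTop (nhds 1) :=
  stmt5_general A Sg C hstat hspec F Ω hF hΩ
end
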